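/- arXiv:2505.15468 — 3 statements merged into one kernel-verified Lean document; each statement's English description precedes it below -/
import Mathlib

section
/- In the finite fully-branched C^{1+α} IFS setting with its dimension-δ Gibbs measure μ, assume (MNL) holds with constant C_MNL. Then for every N ≥ 1 there exist words a, b ∈ 𝒜^N such that: for every finite word c ∈ 𝒜* and every y ∈ I_c ∩ F, there exists x ∈ I_c ∩ F with |X_a(x,y) − X_b(x,y)| ≥ μ(I_c)/(3·C_MNL). -/
open MeasureTheory
open scoped ENNReal

noncomputable section

/-- The geometric part of a finite, fully-branched `C^{1+α}` iterated function system: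
finitely many `C¹` contractions `g a` of a compact interval `J = [lo, hi]` with
`0 < κm ≤ |g_a'| ≤ κp < 1` and pairwise disjoint images. -/
structure FiniteIFS where
  A : Type
  finA : Finite A
  neA : Nonempty A
  lo : ℝ
  hi : ℝ
  hlohi : lo < hi
  g : A → ℝ → ℝ
  gd : A → ℝ → ℝ
  hderiv : ∀ a, ∀ x ∈ Set.Icc lo hi, HasDerivAt (g a) (gd a x) x
  hmaps : ∀ a, Set.MapsTo (g a) (Set.Icc lo hi) (Set.Icc lo hi)
  κm : ℝ
  κp : ℝ
  hκm : 0 < κm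
  hκp : κp < 1
  hcontr : ∀ a, ∀ x ∈ Set.Icc lo hi, κm ≤ |gd a x| ∧ |gd a x| ≤ κp
  hdisj : ∀ a b : A, a ≠ b → Disjoint (g a '' Set.Icc lo hi) (g b '' Set.Icc lo hi)

namespace FiniteIFS

variable (S : FiniteIFS)

/-- The ambient compact interval `J`. -/
def J : Set ℝ := Set.Icc S.lo S.hi

/-- The composition `g_{a₁} ∘ ⋯ ∘ g_{a_n}` along a word. -/
def gW : List S.A → ℝ → ℝ
  | [], x => x
  | a :: l, x => S.g a (gW l x)

/-- The chain-rule derivative of `gW` along a word. -/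
def gD : List S.A → ℝ → ℝ
  | [], _ => 1
  | a :: l, x => S.gd a (S.gW l x) * gD l x

/-- The cylinder interval `I_a = g_a(J)`. -/
def cyl (l : List S.A) : Set ℝ := S.gW l '' S.J

/-- The attractor `F = ⋂ₙ ⋃_{a∈𝒜ⁿ} I_a`. -/
def attract : Set ℝ := ⋂ n : ℕ, ⋃ a : Fin (n + 1) → S.A, S.cyl (List.ofFn a)

/-- The distortion fluctuation `X_a(x,y) = log|g_a'(x)| − log|g_a'(y)|`. -/
def X (l : List S.A) (x y : ℝ) : ℝ := Real.log |S.gD l x| - Real.log |S.gD l y|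

/-- The finite-scale temporal distance. -/
def Delta (a b : List S.A) (x y : ℝ) : ℝ := S.X a x y - S.X b x y

end FiniteIFS

/-- A finite fully-branched `C^{1+α}` IFS together with its dimension-`δ` Gibbs
(equilibrium) measure `μ` for the potential `δ·log|g'|`, where `δ = dim_H F`. -/
structure FiniteGibbsIFS extends FiniteIFS where
  refPt : List A → ℝ
  refPt_mem : ∀ l, refPt l ∈ toFiniteIFS.cyl l
  δ : ℝ
  hδ : δ ∈ Set.Ioo (0:ℝ) 1
  hdim : ENNReal.ofReal δ = dimH toFiniteIFS.attract
  Cstar : ℝ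
  hCstar : 1 ≤ Cstar
  hXHolder : ∀ l : List A, ∀ x ∈ Set.Icc lo hi, ∀ y ∈ Set.Icc lo hi,
    |toFiniteIFS.X l x y| ≤ Cstar * |x - y| ^ δ
  hmult : ∀ l l' : List A,
    Metric.diam (toFiniteIFS.cyl (l ++ l')) ≤
        Cstar * (Metric.diam (toFiniteIFS.cyl l) * Metric.diam (toFiniteIFS.cyl l')) ∧
      Metric.diam (toFiniteIFS.cyl l) * Metric.diam (toFiniteIFS.cyl l') ≤
        Cstar * Metric.diam (toFiniteIFS.cyl (l ++ l'))
  μ : Measure ℝ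
  hprob : IsProbabilityMeasure μ
  hsupp : μ (toFiniteIFS.attract)ᶜ = 0
  hfrostman : ∀ l : List A,
    (μ (toFiniteIFS.cyl l)).toReal ≤ Cstar * Metric.diam (toFiniteIFS.cyl l) ^ δ ∧
      Metric.diam (toFiniteIFS.cyl l) ^ δ ≤ Cstar * (μ (toFiniteIFS.cyl l)).toReal
  w : List A → ℝ → ℝ
  hw : ∀ l : List A, ∀ x ∈ Set.Icc lo hi,
    (μ (toFiniteIFS.cyl l)).toReal ≤ Cstar * w l x ∧
      w l x ≤ Cstar * (μ (toFiniteIFS.cyl l)).toReal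
  conformal : ∀ n : ℕ, ∀ f : ℝ → ℝ, Continuous f →
    ∫ x, f x ∂μ = ∑' a : Fin n → A,
      ∫ x, w (List.ofFn a) x * f (toFiniteIFS.gW (List.ofFn a) x) ∂μ

namespace FiniteGibbsIFS

variable (S : FiniteGibbsIFS)

abbrev J : Set ℝ := S.toFiniteIFS.J
abbrev gW : List S.A → ℝ → ℝ := S.toFiniteIFS.gW
abbrev gD : List S.A → ℝ → ℝ := S.toFiniteIFS.gD
abbrev cyl : List S.A → Set ℝ := S.toFiniteIFS.cyl
abbrev attract : Set ℝ := S.toFiniteIFS.attract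
abbrev X : List S.A → ℝ → ℝ → ℝ := S.toFiniteIFS.X
abbrev Delta : List S.A → List S.A → ℝ → ℝ → ℝ := S.toFiniteIFS.Delta

/-- The Measure Non-Linearity condition (MNL): for every `N ≥ 1` there are words
`a, b ∈ 𝒜^N` such that the pushforward of `μ` under `X_a(·,x₀) - X_b(·,x₀)` is
absolutely non-concentrated: it gives mass at most `C_MNL |I|` to every interval `I`,
uniformly in `x₀ ∈ F`. -/
def MNL (CM : ℝ) : Prop :=
  ∀ N : ℕ, 1 ≤ N → ∃ a b : Fin N → S.A,
    ∀ x₀ ∈ S.attract, ∀ u v : ℝ, u ≤ v →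
      S.μ {x : ℝ | x ∈ S.attract ∧
          S.X (List.ofFn a) x x₀ - S.X (List.ofFn b) x x₀ ∈ Set.Icc u v}
        ≤ ENNReal.ofReal (CM * (v - u))

end FiniteGibbsIFS

end
open Set in
theorem exists_mem_inter_lt_abs_of_measure_lt {α : Type*} [MeasurableSpace α] {μ : Measure α}
    {E F : Set α} (hF : μ Fᶜ = 0) {f : α → ℝ} {r : ℝ}
    (hsmall : μ {x | x ∈ F ∧ f x ∈ Icc (-r) r} < μ E) :
    ∃ x ∈ E ∩ F, r < |f x| := by
  by_contra! hclose
  have hsub : E ∩ F ⊆ {x | x ∈ F ∧ f x ∈ Icc (-r) r} :=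
    fun x hx => ⟨hx.2, abs_le.mp (hclose x hx)⟩
  have hconull : μ (E ∩ F) = μ E := measure_inter_conull hF
  exact (measure_mono hsub).not_gt (hconull ▸ hsmall)

/-- **(MNL) implies the everywhere separation (MNL-UNI) property** (Lemma 6.1).

In the finite fully-branched `C^{1+α}` IFS setting with its dimension-`δ` Gibbs measure
`μ`, if (MNL) holds with constant `C_MNL`, then for every `N ≥ 1` there exist words
`a, b ∈ 𝒜^N` such that for every finite word `c` and every `y ∈ I_c ∩ F` there is
`x ∈ I_c ∩ F` with `|X_a(x,y) − X_b(x,y)| ≥ μ(I_c)/(3 C_MNL)`. -/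
theorem separation_of_MNL (S : FiniteGibbsIFS) (CM : ℝ) (hCM : 0 < CM)
    (hMNL : S.MNL CM) :
    ∀ N : ℕ, 1 ≤ N → ∃ a b : Fin N → S.A,
      ∀ c : List S.A, ∀ y ∈ S.cyl c ∩ S.attract,
        ∃ x ∈ S.cyl c ∩ S.attract,
          (S.μ (S.cyl c)).toReal / (3 * CM) ≤
            |S.X (List.ofFn a) x y - S.X (List.ofFn b) x y| := by
  intro N hN
  obtain ⟨a, b, hab⟩ := hMNL N hN
  refine ⟨a, b, fun c y hy => ?_⟩
  have := S.hprob
  set t := (S.μ (S.cyl c)).toReal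
  rcases (ENNReal.toReal_nonneg : 0 ≤ t).eq_or_lt with ht | ht
  · exact ⟨y, hy, by rw [show t = 0 from ht.symm, zero_div]; exact abs_nonneg _⟩
  set r := t / (3 * CM)
  -- (MNL) on `[-r, r]` only sees mass `2 C_MNL r = 2t/3 < t`.
  have hsmall : S.μ {x | x ∈ S.attract ∧
      S.X (List.ofFn a) x y - S.X (List.ofFn b) x y ∈ Set.Icc (-r) r} < S.μ (S.cyl c) :=
    calc _ ≤ ENNReal.ofReal (CM * (r - -r)) := hab y hy.2 _ _ (neg_le_self (by positivity))
      _ = ENNReal.ofReal (2 / 3 * t) := by congr 1; simp only [r]; field_simp; ring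
      _ < ENNReal.ofReal t := (ENNReal.ofReal_lt_ofReal_iff ht).2 (by linarith)
      _ = S.μ (S.cyl c) := ENNReal.ofReal_toReal (measure_ne_top _ _)
  obtain ⟨x, hx, hlt⟩ := exists_mem_inter_lt_abs_of_measure_lt S.hsupp hsmall
  exact ⟨x, hx, hlt.le⟩
end

section
/- For every t ∈ (0,1), define ψ₀(x) := (x+t)/(x+t+1), ψ₁(x) := (x+t)/(2x+2t+1), and their composition ψ₁∘ψ₀ (explicitly (ψ₁∘ψ₀)(x) = ((1+t)x + t² + 2t)/((3+2t)x + 2t² + 5t + 1)), and let x₀ := (−t+√(t²+4t))/2, x₁ := (−t+√(t²+2t))/2, x₁₀ := (−t(1+t)+√(t(1+t)(t+2)(t+3)))/(3+2t) be their respective fixed points in (0,1). Then log (ψ₁∘ψ₀)'(x₁₀) ≠ log ψ₀'(x₀) + log ψ₁'(x₁); equivalently, (t+1+√(t²+2t))·(t+2+√(t²+4t)) ≠ 2·(t²+3t+1+√(t(1+t)(t+2)(t+3))) for all t ∈ (0,1). -/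
noncomputable section

/-- Derivative of the branch `ψ₀(x) = (x+t)/(x+t+1)` of the accelerated Lyons IFS. -/
def dpsi0 (t x : ℝ) : ℝ := 1 / (x + t + 1) ^ 2

/-- Derivative of the branch `ψ₁(x) = (x+t)/(2x+2t+1)` of the accelerated Lyons IFS. -/
def dpsi1 (t x : ℝ) : ℝ := 1 / (2 * x + 2 * t + 1) ^ 2

/-- Derivative of the composition `ψ₁ ∘ ψ₀`. -/
def dpsi10 (t x : ℝ) : ℝ := 1 / ((3 + 2 * t) * x + 2 * t ^ 2 + 5 * t + 1) ^ 2

/-- Fixed point of `ψ₀` in `(0,1)`. -/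
def fp0 (t : ℝ) : ℝ := (-t + Real.sqrt (t ^ 2 + 4 * t)) / 2

/-- Fixed point of `ψ₁` in `(0,1)`. -/
def fp1 (t : ℝ) : ℝ := (-t + Real.sqrt (t ^ 2 + 2 * t)) / 2

/-- Fixed point of `ψ₁ ∘ ψ₀` in `(0,1)`. -/
def fp10 (t : ℝ) : ℝ :=
  (-(t * (1 + t)) + Real.sqrt (t * (1 + t) * (t + 2) * (t + 3))) / (3 + 2 * t)

/-! `ψ₀`, `ψ₁` and `ψ₁ ∘ ψ₀` are Möbius maps with matrices in `SL₂(ℝ)`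
(`[[1,t],[1,t+1]]`, `[[1,t],[2,2t+1]]` and their product) of traces `2s` for
`s = (t+2)/2`, `t+1` and `t²+3t+1`. The derivative of such a map at its attracting fixed point is
`λ⁻²`, where `λ ≥ 1` is the eigenvalue, determined by `λ + λ⁻¹ = 2s`; call these
`λ₀, λ₁, λ₁₀`.
Then `λ₀λ₁ + (λ₀λ₁)⁻¹ = (t+1)(t+2) + √((t²+2t)(t²+4t)) < 2(t²+3t+1)` since
`(t+2)(t+4) < (t+3)²`, and as `x ↦ x + x⁻¹` increases on `[1, ∞)`, `λ₀λ₁ < λ₁₀`.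
With `fp10` as defined, `(3+2t)·fp10 t + 2t²+5t+1` is `λ₁₀ + t`, larger still. -/

/-- The eigenvalue `≥ 1` of a matrix in `SL₂(ℝ)` of trace `2s`, for `1 ≤ s`. -/
def sl2Eigenvalue (s : ℝ) : ℝ := s + √(s ^ 2 - 1)

section sl2Eigenvalue

variable {s : ℝ}

lemma one_le_sl2Eigenvalue (hs : 1 ≤ s) : 1 ≤ sl2Eigenvalue s :=
  le_add_of_le_of_nonneg hs (Real.sqrt_nonneg _)

lemma sl2Eigenvalue_pos (hs : 1 ≤ s) : 0 < sl2Eigenvalue s :=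
  zero_lt_one.trans_le (one_le_sl2Eigenvalue hs)

lemma sl2Eigenvalue_inv (hs : 1 ≤ s) : (sl2Eigenvalue s)⁻¹ = s - √(s ^ 2 - 1) := by
  apply inv_eq_of_mul_eq_one_right
  have hsq : √(s ^ 2 - 1) ^ 2 = s ^ 2 - 1 := Real.sq_sqrt (by nlinarith)
  rw [sl2Eigenvalue]
  linear_combination -hsq

lemma sl2Eigenvalue_add_inv (hs : 1 ≤ s) :
    sl2Eigenvalue s + (sl2Eigenvalue s)⁻¹ = 2 * s := by
  rw [sl2Eigenvalue_inv hs, sl2Eigenvalue]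
  ring

end sl2Eigenvalue

lemma lt_of_add_inv_lt_add_inv {x y : ℝ} (hx : 1 ≤ x) (hy : 1 ≤ y)
    (h : x + x⁻¹ < y + y⁻¹) : x < y := by
  by_contra! hyx
  have hinv : y⁻¹ - x⁻¹ = (x - y) / (x * y) := by field_simp
  have : (x - y) / (x * y) ≤ x - y := div_le_self (by linarith) (by nlinarith)
  linarith

lemma sl2Eigenvalue_mul_lt {s₀ s₁ s : ℝ} (h₀ : 1 ≤ s₀) (h₁ : 1 ≤ s₁) (hs : 1 ≤ s)
    (hpos : 0 < s - s₀ * s₁) (h : (s₀ ^ 2 - 1) * (s₁ ^ 2 - 1) < (s - s₀ * s₁) ^ 2) :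
    sl2Eigenvalue s₀ * sl2Eigenvalue s₁ < sl2Eigenvalue s := by
  have hsqrt : √(s₀ ^ 2 - 1) * √(s₁ ^ 2 - 1) < s - s₀ * s₁ := by
    rw [← Real.sqrt_mul (by nlinarith), Real.sqrt_lt' hpos]
    exact h
  have hsum : sl2Eigenvalue s₀ * sl2Eigenvalue s₁ + (sl2Eigenvalue s₀ * sl2Eigenvalue s₁)⁻¹
      = 2 * (s₀ * s₁ + √(s₀ ^ 2 - 1) * √(s₁ ^ 2 - 1)) := by
    rw [mul_inv, sl2Eigenvalue_inv h₀, sl2Eigenvalue_inv h₁, sl2Eigenvalue, sl2Eigenvalue]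
    ring
  have hprod : 1 ≤ sl2Eigenvalue s₀ * sl2Eigenvalue s₁ :=
    one_le_mul_of_one_le_of_one_le (one_le_sl2Eigenvalue h₀) (one_le_sl2Eigenvalue h₁)
  refine lt_of_add_inv_lt_add_inv hprod (one_le_sl2Eigenvalue hs) ?_
  rw [hsum, sl2Eigenvalue_add_inv hs]
  linarith

section Lyons

variable {t : ℝ}

lemma sl2Eigenvalue_add_one : sl2Eigenvalue (t + 1) = t + 1 + √(t ^ 2 + 2 * t) := by
  rw [sl2Eigenvalue, show (t + 1) ^ 2 - 1 = t ^ 2 + 2 * t by ring]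

lemma two_mul_sl2Eigenvalue_half :
    2 * sl2Eigenvalue ((t + 2) / 2) = t + 2 + √(t ^ 2 + 4 * t) := by
  rw [sl2Eigenvalue, show ((t + 2) / 2) ^ 2 - 1 = (t ^ 2 + 4 * t) / 2 ^ 2 by ring,
    Real.sqrt_div' _ (by positivity), Real.sqrt_sq zero_le_two]
  ring

lemma sl2Eigenvalue_lyons :
    sl2Eigenvalue (t ^ 2 + 3 * t + 1)
      = t ^ 2 + 3 * t + 1 + √(t * (1 + t) * (t + 2) * (t + 3)) := by
  rw [sl2Eigenvalue,
    show (t ^ 2 + 3 * t + 1) ^ 2 - 1 = t * (1 + t) * (t + 2) * (t + 3) by ring]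

lemma dpsi0_fp0 : dpsi0 t (fp0 t) = 1 / sl2Eigenvalue ((t + 2) / 2) ^ 2 := by
  have h := two_mul_sl2Eigenvalue_half (t := t)
  rw [dpsi0, fp0]
  congr 2
  linarith

lemma dpsi1_fp1 : dpsi1 t (fp1 t) = 1 / sl2Eigenvalue (t + 1) ^ 2 := by
  rw [dpsi1, fp1, sl2Eigenvalue_add_one]
  ring

lemma dpsi10_fp10 (ht : 3 + 2 * t ≠ 0) :
    dpsi10 t (fp10 t) = 1 / (sl2Eigenvalue (t ^ 2 + 3 * t + 1) + t) ^ 2 := by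
  rw [dpsi10, fp10, sl2Eigenvalue_lyons, mul_div_cancel₀ _ ht]
  ring

lemma sl2Eigenvalue_mul_lt_lyons (ht : 0 < t) :
    sl2Eigenvalue ((t + 2) / 2) * sl2Eigenvalue (t + 1)
      < sl2Eigenvalue (t ^ 2 + 3 * t + 1) := by
  apply sl2Eigenvalue_mul_lt <;> nlinarith

end Lyons

/-- **Non-vanishing of the cocycle obstruction for the Lyons sub-IFS.**

For every `t ∈ (0,1)`, with `ψ₀(x) = (x+t)/(x+t+1)`, `ψ₁(x) = (x+t)/(2x+2t+1)` and their
composition `ψ₁∘ψ₀`, and with `x₀, x₁, x₁₀` the respective fixed points in `(0,1)`, we have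
`log (ψ₁∘ψ₀)'(x₁₀) ≠ log ψ₀'(x₀) + log ψ₁'(x₁)`; equivalently
`(t+1+√(t²+2t))(t+2+√(t²+4t)) ≠ 2(t²+3t+1+√(t(1+t)(t+2)(t+3)))`. -/
theorem lyons_cocycle_obstruction (t : ℝ) (ht : t ∈ Set.Ioo (0:ℝ) 1) :
    Real.log (dpsi10 t (fp10 t)) ≠ Real.log (dpsi0 t (fp0 t)) + Real.log (dpsi1 t (fp1 t)) ∧
    (t + 1 + Real.sqrt (t ^ 2 + 2 * t)) * (t + 2 + Real.sqrt (t ^ 2 + 4 * t)) ≠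
      2 * (t ^ 2 + 3 * t + 1 + Real.sqrt (t * (1 + t) * (t + 2) * (t + 3))) := by
  obtain ⟨ht0, -⟩ := ht
  have hlt := sl2Eigenvalue_mul_lt_lyons ht0
  have h₀ : 0 < sl2Eigenvalue ((t + 2) / 2) := sl2Eigenvalue_pos (by linarith)
  have h₁ : 0 < sl2Eigenvalue (t + 1) := sl2Eigenvalue_pos (by linarith)
  have h₁₀ : 0 < sl2Eigenvalue (t ^ 2 + 3 * t + 1) := sl2Eigenvalue_pos (by nlinarith)
  refine ⟨ne_of_lt ?_, ne_of_lt ?_⟩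
  · rw [dpsi0_fp0, dpsi1_fp1, dpsi10_fp10 (by positivity),
      ← Real.log_mul (by positivity) (by positivity), div_mul_div_comm, one_mul, ← mul_pow]
    apply Real.log_lt_log (by positivity)
    gcongr
    linarith
  · rw [← sl2Eigenvalue_add_one, ← two_mul_sl2Eigenvalue_half, ← sl2Eigenvalue_lyons]
    linear_combination 2 * hlt
end
end

section
/- Let t ∈ (0,1), f₀(x) := x/(1+x) and f_t(x) := (x+t)/(1+x+t) on [0,1], and for n ≥ 0 let ψ_n^t := f₀ⁿ ∘ f_t (the n-fold iterate of f₀ composed with f_t); explicitly ψ_n^t(x) = (x+t)/((n+1)(x+t)+1). If ν is a Borel probability measure on [0,1] satisfying ν = (1/2)(f₀)_*ν + (1/2)(f_t)_*ν, then ν = Σ_{n=0}^∞ 2^{−(n+1)} (ψ_n^t)_*ν. -/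
/-!
Unfolding the self-similarity `ν = c • f_*ν + d • g_*ν` along the `f`-branch `N` times gives
`ν = c ^ N • (f^[N])_*ν + ∑_{n<N} c ^ n d • (f^[n] ∘ g)_*ν`. For a finite measure and `c < 1`
the remainder has mass at most `c ^ N ν(univ) → 0`, which leaves the induced series.
-/

open MeasureTheory Filter Topology
open scoped ENNReal

namespace MeasureTheory.Measure

variable {α : Type*} [MeasurableSpace α] {ν : Measure α} {f g : α → α} {c d : ℝ≥0∞}

theorem eq_smul_map_iterate_add_sum_of_eq_smul_map_add (hf : Measurable f) (hg : Measurable g)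
    (hν : ν = c • ν.map f + d • ν.map g) (N : ℕ) :
    ν = c ^ N • ν.map f^[N] + ∑ n ∈ Finset.range N, (c ^ n * d) • ν.map (f^[n] ∘ g) := by
  induction N with
  | zero => simp
  | succ N ih =>
    have hmap : ν.map f^[N] = c • ν.map f^[N + 1] + d • ν.map (f^[N] ∘ g) := by
      conv_lhs => rw [hν]
      rw [Measure.map_add _ _ (hf.iterate N), Measure.map_smul, Measure.map_smul,
        map_map (hf.iterate N) hf, map_map (hf.iterate N) hg, ← Function.iterate_succ]
    conv_lhs => rw [ih, hmap, smul_add, smul_smul, smul_smul]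
    rw [Finset.sum_range_succ, pow_succ]
    abel

theorem eq_sum_smul_map_iterate_comp_of_eq_smul_map_add [IsFiniteMeasure ν]
    (hf : Measurable f) (hg : Measurable g) (hc : c < 1) (hν : ν = c • ν.map f + d • ν.map g) :
    ν = sum fun n ↦ (c ^ n * d) • ν.map (f^[n] ∘ g) := by
  ext s hs
  set a : ℕ → ℝ≥0∞ := fun n ↦ ((c ^ n * d) • ν.map (f^[n] ∘ g)) s
  have hsplit (N : ℕ) : ν s = c ^ N * ν.map f^[N] s + ∑ n ∈ Finset.range N, a n := by
    conv_lhs => rw [eq_smul_map_iterate_add_sum_of_eq_smul_map_add hf hg hν N]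
    simp [a]
  have hrem : Tendsto (fun N ↦ c ^ N * ν.map f^[N] s) atTop (𝓝 0) := by
    have hbound : Tendsto (fun N ↦ c ^ N * ν Set.univ) atTop (𝓝 0) := by
      simpa using ENNReal.Tendsto.mul_const (ENNReal.tendsto_pow_atTop_nhds_zero_of_lt_one hc)
        (Or.inr (measure_ne_top ν Set.univ))
    refine tendsto_of_tendsto_of_tendsto_of_le_of_le tendsto_const_nhds hbound (fun _ ↦ zero_le)
      fun N ↦ mul_le_mul_right ?_ _
    rw [map_apply (hf.iterate N) hs]
    exact measure_mono (Set.subset_univ _)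
  have hlim : Tendsto (fun N ↦ c ^ N * ν.map f^[N] s + ∑ n ∈ Finset.range N, a n) atTop
      (𝓝 (0 + ∑' n, a n)) :=
    hrem.add (ENNReal.tendsto_nat_tsum a)
  rw [sum_apply _ hs, ← zero_add (∑' n, a n)]
  exact tendsto_nhds_unique (by simpa only [← hsplit] using tendsto_const_nhds) hlim

end MeasureTheory.Measure

theorem lyons_induced_invariance_general (t : ℝ)
    (ν : Measure ℝ) [IsProbabilityMeasure ν]
    (hconf : ν = (1/2 : ℝ≥0∞) • Measure.map (fun x : ℝ => x / (1 + x)) ν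
               + (1/2 : ℝ≥0∞) • Measure.map (fun x : ℝ => (x + t) / (1 + x + t)) ν) :
    ν = Measure.sum (fun n : ℕ =>
      ((1/2 : ℝ≥0∞) ^ (n + 1)) •
        Measure.map
          ((fun x : ℝ => x / (1 + x))^[n] ∘ (fun x : ℝ => (x + t) / (1 + x + t))) ν) := by
  have hf₀ : Measurable fun x : ℝ => x / (1 + x) := by fun_prop
  have hfₜ : Measurable fun x : ℝ => (x + t) / (1 + x + t) := by fun_prop
  simpa only [pow_succ] using
    Measure.eq_sum_smul_map_iterate_comp_of_eq_smul_map_add hf₀ hfₜ (by norm_num) hconf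

/-- **Inducing the Lyons IFS on the parabolic branch.**

Let `t ∈ (0,1)`, `f₀(x) = x/(1+x)`, `f_t(x) = (x+t)/(1+x+t)`, and for `n ≥ 0` let
`ψₙᵗ = f₀ⁿ ∘ f_t`.  If `ν` is a Borel probability measure on `[0,1]` with
`ν = ½ (f₀)_*ν + ½ (f_t)_*ν`, then `ν = Σₙ 2^{-(n+1)} (ψₙᵗ)_*ν`. -/
theorem lyons_induced_invariance (t : ℝ) (ht : t ∈ Set.Ioo (0:ℝ) 1)
    (ν : Measure ℝ) [IsProbabilityMeasure ν]
    (hsupp : ν (Set.Icc (0:ℝ) 1)ᶜ = 0)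
    (hconf : ν = (1/2 : ℝ≥0∞) • Measure.map (fun x : ℝ => x / (1 + x)) ν
               + (1/2 : ℝ≥0∞) • Measure.map (fun x : ℝ => (x + t) / (1 + x + t)) ν) :
    ν = Measure.sum (fun n : ℕ =>
      ((1/2 : ℝ≥0∞) ^ (n + 1)) •
        Measure.map
          ((fun x : ℝ => x / (1 + x))^[n] ∘ (fun x : ℝ => (x + t) / (1 + x + t))) ν) :=
  lyons_induced_invariance_general t ν hconf
end
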